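/- Let E be a real inner product space (finite dimensional, or a real Hilbert space), let f : E → ℝ be L-smooth with L > 0 and bounded below by f*, and let 0 < η < 2/L. Define gradient descent iterates x_{t+1} = x_t − η·∇f(x_t) from x₀. Then for every T ≥ 1, the smallest gradient norm among the first T iterates satisfies min_{0≤t<T} ‖∇f(x_t)‖² ≤ (f(x₀) − f*) / (T·η·(1 − Lη/2)); in particular, for every threshold τ > 0 there exists a finite T such that min_{0≤t<T} ‖∇f(x_t)‖ ≤ τ. -/

import Mathlib

/-! The descent lemma `f b ≤ f a + ⟪∇f a, b - a⟫ + L/2 ‖b - a‖²` shows that each step lowers `f`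
by at least `c ‖∇f(x_t)‖²` with `c = η (1 - Lη/2) > 0`. Telescoping and `f ≥ f*` bound the sum of
these terms over `t < T` by `f(x₀) - f*`, and the minimum is at most the average. -/

open Filter Finset Topology

theorem le_add_fderiv_add_of_norm_fderiv_sub_le {E : Type*} [NormedAddCommGroup E]
    [NormedSpace ℝ E] {f : E → ℝ} {f' : E → E →L[ℝ] ℝ} {L : ℝ} {a : E}
    (hf : ∀ x, HasFDerivAt f (f' x) x) (hlip : ∀ x, ‖f' x - f' a‖ ≤ L * ‖x - a‖) (b : E) :
    f b ≤ f a + f' a (b - a) + L / 2 * ‖b - a‖ ^ 2 := by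
  set v := b - a
  -- `φ` is `t ↦ f (a + t • v)` minus its quadratic upper model; the Lipschitz bound makes it
  -- antitone.
  set φ : ℝ → ℝ := fun t => f (a + t • v) - t * f' a v - L / 2 * t ^ 2 * ‖v‖ ^ 2
  have hφ : ∀ t, HasDerivAt φ (f' (a + t • v) v - f' a v - L * t * ‖v‖ ^ 2) t := by
    intro t
    have hline : HasDerivAt (fun s : ℝ => a + s • v) v t := by
      simpa using ((hasDerivAt_id t).smul_const v).const_add a
    have hquad := ((hasDerivAt_pow 2 t).const_mul (L / 2)).mul_const (‖v‖ ^ 2)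
    refine ((((hf _).comp_hasDerivAt t hline).sub
      ((hasDerivAt_id t).mul_const (f' a v))).sub hquad).congr_deriv ?_
    simp only [one_mul]
    ring
  have hderiv_nonpos : ∀ t ∈ interior (Set.Icc (0 : ℝ) 1),
      f' (a + t • v) v - f' a v - L * t * ‖v‖ ^ 2 ≤ 0 := by
    intro t ht
    rw [interior_Icc] at ht
    calc f' (a + t • v) v - f' a v - L * t * ‖v‖ ^ 2
        = (f' (a + t • v) - f' a) v - L * t * ‖v‖ ^ 2 := rfl
      _ ≤ ‖f' (a + t • v) - f' a‖ * ‖v‖ - L * t * ‖v‖ ^ 2 := by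
        gcongr
        exact (le_abs_self _).trans ((f' (a + t • v) - f' a).le_opNorm v)
      _ ≤ L * ‖t • v‖ * ‖v‖ - L * t * ‖v‖ ^ 2 := by
        gcongr
        simpa using hlip (a + t • v)
      _ = 0 := by rw [norm_smul, Real.norm_of_nonneg ht.1.le]; ring
  have hanti : AntitoneOn φ (Set.Icc 0 1) :=
    antitoneOn_of_hasDerivWithinAt_nonpos (convex_Icc 0 1)
      (fun t _ => (hφ t).continuousAt.continuousWithinAt)
      (fun t _ => (hφ t).hasDerivWithinAt) hderiv_nonpos
  have h10 := hanti (Set.left_mem_Icc.mpr zero_le_one) (Set.right_mem_Icc.mpr zero_le_one)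
    zero_le_one
  simp only [φ, one_smul, zero_smul, add_zero, v, add_sub_cancel] at h10
  linarith

theorem le_add_inner_gradient_add_of_norm_gradient_sub_le {E : Type*} [NormedAddCommGroup E]
    [InnerProductSpace ℝ E] [CompleteSpace E] {f : E → ℝ} {f' : E → E} {L : ℝ} {a : E}
    (hf : ∀ x, HasGradientAt f (f' x) x) (hlip : ∀ x, ‖f' x - f' a‖ ≤ L * ‖x - a‖) (b : E) :
    f b ≤ f a + inner ℝ (f' a) (b - a) + L / 2 * ‖b - a‖ ^ 2 :=
  le_add_fderiv_add_of_norm_fderiv_sub_le (fun x => (hf x).hasFDerivAt)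
    (fun x => by simpa only [← map_sub, LinearIsometryEquiv.norm_map] using hlip x) b

theorem apply_sub_smul_gradient_le {E : Type*} [NormedAddCommGroup E]
    [InnerProductSpace ℝ E] [CompleteSpace E] {f : E → ℝ} {f' : E → E} {L : ℝ}
    (hf : ∀ x, HasGradientAt f (f' x) x) (hlip : ∀ x y, ‖f' x - f' y‖ ≤ L * ‖x - y‖)
    (η : ℝ) (a : E) :
    f (a - η • f' a) ≤ f a - η * (1 - L * η / 2) * ‖f' a‖ ^ 2 := by
  have h := le_add_inner_gradient_add_of_norm_gradient_sub_le hf (fun x => hlip x a) (a - η • f' a)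
  rw [sub_sub_cancel_left, inner_neg_right, real_inner_smul_right, real_inner_self_eq_norm_sq,
    norm_neg, norm_smul, Real.norm_eq_abs, mul_pow, sq_abs] at h
  linarith

theorem inf'_range_le_div_of_mul_le_sub_succ {g u : ℕ → ℝ} {c m : ℝ} (hc : 0 < c)
    (hstep : ∀ t, c * g t ≤ u t - u (t + 1)) (hm : ∀ t, m ≤ u t) {T : ℕ}
    (hT : (range T).Nonempty) :
    (range T).inf' hT g ≤ (u 0 - m) / (T * c) := by
  have hT_pos : (0 : ℝ) < T := by exact_mod_cast nonempty_range_iff.mp hT |>.bot_lt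
  rw [le_div_iff₀ (by positivity)]
  calc (range T).inf' hT g * (T * c)
      = (range T).card • (c * (range T).inf' hT g) := by rw [card_range, nsmul_eq_mul]; ring
    _ ≤ ∑ t ∈ range T, c * g t :=
      card_nsmul_le_sum _ _ _ fun t ht => mul_le_mul_of_nonneg_left (inf'_le g ht) hc.le
    _ ≤ ∑ t ∈ range T, (u t - u (t + 1)) := sum_le_sum fun t _ => hstep t
    _ = u 0 - u T := sum_range_sub' u T
    _ ≤ u 0 - m := by linarith [hm T]

/-- If `f : E → ℝ` is `L`-smooth with `L > 0`, bounded below by `fstar`, and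
`0 < η < 2 / L`, then for the gradient descent iterates
`x (t+1) = x t - η • f' (x t)`, for every `T ≥ 1` the smallest squared gradient
norm among the first `T` iterates satisfies
`min_{0 ≤ t < T} ‖f' (x t)‖² ≤ (f (x 0) - fstar) / (T * η * (1 - L * η / 2))`;
in particular, for every threshold `τ > 0` there exists a finite `T ≥ 1` with
`min_{0 ≤ t < T} ‖f' (x t)‖ ≤ τ`. -/
theorem gradient_descent_min_grad_bound
    {E : Type*} [NormedAddCommGroup E] [InnerProductSpace ℝ E] [CompleteSpace E]
    (f : E → ℝ) (f' : E → E) (L : ℝ) (hL : 0 < L)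
    (hdiff : ∀ x, HasGradientAt f (f' x) x)
    (hlip : ∀ x y, ‖f' x - f' y‖ ≤ L * ‖x - y‖)
    (fstar : ℝ) (hbdd : ∀ x, fstar ≤ f x)
    (η : ℝ) (hη : 0 < η) (hη' : η < 2 / L)
    (x : ℕ → E) (hx : ∀ t, x (t + 1) = x t - η • f' (x t)) :
    (∀ T, ∀ hT : 1 ≤ T,
      (Finset.range T).inf'
          (Finset.nonempty_range_iff.mpr (Nat.one_le_iff_ne_zero.mp hT))
          (fun t => ‖f' (x t)‖ ^ 2) ≤
        (f (x 0) - fstar) / ((T : ℝ) * η * (1 - L * η / 2))) ∧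
    ∀ τ : ℝ, 0 < τ → ∃ T, ∃ hT : 1 ≤ T,
      (Finset.range T).inf'
          (Finset.nonempty_range_iff.mpr (Nat.one_le_iff_ne_zero.mp hT))
          (fun t => ‖f' (x t)‖) ≤ τ := by
  have hc : 0 < η * (1 - L * η / 2) := by
    have : η * L < 2 := (lt_div_iff₀ hL).mp hη'
    nlinarith
  have hdescent : ∀ t, η * (1 - L * η / 2) * ‖f' (x t)‖ ^ 2 ≤ f (x t) - f (x (t + 1)) :=
    fun t => by rw [hx t]; linarith [apply_sub_smul_gradient_le hdiff hlip η (x t)]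
  have hmin : ∀ T, ∀ hT : 1 ≤ T,
      (range T).inf' (nonempty_range_iff.mpr (Nat.one_le_iff_ne_zero.mp hT))
          (fun t => ‖f' (x t)‖ ^ 2) ≤ (f (x 0) - fstar) / ((T : ℝ) * η * (1 - L * η / 2)) :=
    fun T hT => mul_assoc (T : ℝ) η _ ▸
      inf'_range_le_div_of_mul_le_sub_succ hc hdescent (fun t => hbdd (x t)) _
  refine ⟨hmin, fun τ hτ => ?_⟩
  have hbound_lim : Tendsto (fun T : ℕ => (f (x 0) - fstar) / ((T : ℝ) * η * (1 - L * η / 2)))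
      atTop (𝓝 0) := by
    simpa only [div_div, mul_assoc, zero_div] using
      (tendsto_const_div_atTop_nhds_zero_nat (f (x 0) - fstar)).div_const (η * (1 - L * η / 2))
  obtain ⟨T, hT, hsmall⟩ := ((eventually_ge_atTop 1).and
    (hbound_lim.eventually (ge_mem_nhds (pow_pos hτ 2)))).exists
  obtain ⟨t, ht, hgt⟩ := (inf'_le_iff _).mp ((hmin T hT).trans hsmall)
  refine ⟨T, hT, (inf'_le_iff _).mpr ⟨t, ht, ?_⟩⟩
  exact (pow_le_pow_iff_left₀ (norm_nonneg _) hτ.le two_ne_zero).mp hgt
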